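/- arXiv:1304.4428 — 2 statements merged into one kernel-verified Lean document; each statement's English description precedes it below -/
import Mathlib

section
/- Let g ∈ ℝ^L have all entries nonnegative, and let a ∈ ℤ^L. Define a' ∈ ℤ^L by a'_l = |a_l|. Then a'ᵀGa' ≤ aᵀGa, where G = I − g gᵀ/(1+‖g‖²). Consequently, any minimizer of aᵀGa over nonzero integer vectors can be taken with sign pattern matching g (Lemma 2: sign alignment of the optimal ECV). -/
noncomputable def Qform {L : ℕ} (g a : Fin L → ℝ) : ℝ :=
  (∑ i, (a i)^2) - (∑ i, a i * g i)^2 / (1 + ∑ i, (g i)^2)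

theorem stmt_4 {L : ℕ} (g : Fin L → ℝ) (hg : ∀ l, 0 ≤ g l) (a : Fin L → ℤ) :
    Qform g (fun l => ((|a l| : ℤ) : ℝ)) ≤ Qform g (fun l => (a l : ℝ)) := by
  unfold Qform
  have hsq : ∑ i, (((|a i| : ℤ) : ℝ))^2 = ∑ i, ((a i : ℝ))^2 := by
    refine Finset.sum_congr rfl fun i _ => ?_
    push_cast
    rw [sq_abs]
  rw [hsq]
  have hden : (0:ℝ) < 1 + ∑ i, (g i)^2 := by
    have : (0:ℝ) ≤ ∑ i, (g i)^2 := Finset.sum_nonneg fun i _ => sq_nonneg _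
    linarith
  have hcast : ∀ i, (((|a i| : ℤ) : ℝ)) = |(a i : ℝ)| := by intro i; push_cast; ring
  have h1 : |∑ i, (a i : ℝ) * g i| ≤ ∑ i, ((|a i| : ℤ) : ℝ) * g i := by
    calc |∑ i, (a i : ℝ) * g i| ≤ ∑ i, |(a i : ℝ) * g i| :=
          Finset.abs_sum_le_sum_abs _ _
      _ = ∑ i, ((|a i| : ℤ) : ℝ) * g i := by
          refine Finset.sum_congr rfl fun i _ => ?_
          rw [abs_mul, abs_of_nonneg (hg i), hcast i]
  have hle : ((∑ i, (a i : ℝ) * g i))^2 ≤ (∑ i, ((|a i| : ℤ) : ℝ) * g i)^2 := by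
    rw [← sq_abs (∑ i, (a i : ℝ) * g i)]
    exact pow_le_pow_left₀ (abs_nonneg _) h1 2
  have h2 : (∑ i, (a i : ℝ) * g i)^2 / (1 + ∑ i, (g i)^2) ≤
      (∑ i, ((|a i| : ℤ) : ℝ) * g i)^2 / (1 + ∑ i, (g i)^2) := by gcongr
  linarith
end

section
/- If a nonzero a ∈ ℤ^L has some coordinate a_l ≠ 0 at an index where g_l = 0, then the vector a' obtained from a by setting that coordinate to zero satisfies a'ᵀGa' < aᵀGa whenever a' ≠ 0; hence an optimal ECV has a_l = 0 wherever g_l = 0 (part of Lemma 2). -/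
theorem stmt_19 {L : ℕ} (g : Fin L → ℝ) (l : Fin L) (hg : g l = 0)
    (a : Fin L → ℤ) (ha : a ≠ 0) (hal : a l ≠ 0)
    (ha' : Function.update a l 0 ≠ 0) :
    Qform g (fun i => ((Function.update a l 0) i : ℝ))
      < Qform g (fun i => (a i : ℝ)) := by
  unfold Qform
  have hdot : (∑ i, ((Function.update a l 0 i : ℤ) : ℝ) * g i)
      = ∑ i, (a i : ℝ) * g i := by
    apply Finset.sum_congr rfl
    intro i _
    by_cases h : i = l
    · subst h; simp [hg]
    · simp [Function.update_of_ne h]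
  rw [hdot]
  have hsq : (∑ i, ((Function.update a l 0 i : ℤ) : ℝ)^2)
      < ∑ i, ((a i : ℝ))^2 := by
    apply Finset.sum_lt_sum
    · intro i _
      by_cases h : i = l
      · subst h; simp; positivity
      · simp [Function.update_of_ne h]
    · refine ⟨l, Finset.mem_univ l, ?_⟩
      simp only [Function.update_self]
      push_cast
      have : (0:ℝ) < (a l : ℝ)^2 := by
        have : (a l : ℝ) ≠ 0 := Int.cast_ne_zero.mpr hal
        positivity
      simpa using this
  linarith
end
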